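/- arXiv:1110.5746 — 2 statements merged into one kernel-verified Lean document; each statement's English description precedes it below -/
import Mathlib

section
/- Suppose there exists a state ρ̂ on ℂ^{d_A} with I_c(ρ̂) < 0, and suppose there exists a positive definite (full-rank) state ρ* attaining the maximum of the coherent information, i.e. I_c(ρ*) = Q^{(1)}(N_B). Then C_p^{(1)}(N_B) > Q^{(1)}(N_B). -/
/-!
Let `c > 0` be the smallest eigenvalue of the full-rank maximizer `ρ*` and `0 < ε ≤ min c ½`.
A state satisfies `ρ̂ ≤ 1`, so `ρ* - ε ρ̂ ≥ 0` and `ρ* = (1 - ε) σ + ε ρ̂` for a state `σ`.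
Splitting `σ` along its eigenvectors gives pure states with weights `(1 - ε) λₖ`; together with
`ρ̂` at weight `ε` they form an ensemble with average `ρ*`. Since
`χ(N_B) - χ(N_E) = I_c(ρ̄) - Σ P(u) I_c(ρᵘ)` and a pure input has `I_c = 0` (its two output
marginals are `M Mᴴ` and `(Mᴴ M)ᵀ`, which have the same nonzero spectrum), this ensemble
achieves `I_c(ρ*) - ε I_c(ρ̂) > I_c(ρ*) = Q⁽¹⁾`. Entropies of states lie in `[0, d]`, so the
Holevo differences are bounded above and `C_p⁽¹⁾` is a genuine supremum.
-/

open Matrix BigOperators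
open scoped ComplexOrder

noncomputable section

/-- Matrix logarithm via the spectral decomposition (junk value `0` off Hermitian matrices;
eigenvalue `0` contributes `Real.log 0 = 0`). -/
def matLog {n : Type*} [Fintype n] [DecidableEq n] (ρ : Matrix n n ℂ) : Matrix n n ℂ :=
  if h : ρ.IsHermitian then
    (h.eigenvectorUnitary : Matrix n n ℂ) *
      Matrix.diagonal (fun i => (Real.log (h.eigenvalues i) : ℂ)) *
      (h.eigenvectorUnitary : Matrix n n ℂ)ᴴ
  else 0

/-- Von Neumann entropy `H(ρ) = -Tr[ρ log ρ]`. -/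
def vnEntropy {n : Type*} [Fintype n] [DecidableEq n] (ρ : Matrix n n ℂ) : ℝ :=
  - (ρ * matLog ρ).trace.re

/-- Quantum relative entropy `D(ρ‖σ) = Tr[ρ (log ρ - log σ)]`. -/
def relEntropy {n : Type*} [Fintype n] [DecidableEq n] (ρ σ : Matrix n n ℂ) : ℝ :=
  (ρ * (matLog ρ - matLog σ)).trace.re

/-- A state: positive semidefinite with unit trace. -/
def IsState {n : Type*} [Fintype n] (ρ : Matrix n n ℂ) : Prop :=
  ρ.PosSemidef ∧ ρ.trace = 1

/-- A pure (rank-one) state `|ψ⟩⟨ψ|` for a unit vector `ψ`. -/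
def IsPureState {n : Type*} [Fintype n] (ρ : Matrix n n ℂ) : Prop :=
  ∃ ψ : n → ℂ, (∑ i, Complex.normSq (ψ i)) = 1 ∧ ρ = Matrix.vecMulVec ψ (star ψ)

/-- Support (range) inclusion for matrices. -/
def suppLE {n : Type*} [Fintype n] [DecidableEq n] (ρ σ : Matrix n n ℂ) : Prop :=
  LinearMap.range (Matrix.toLin' ρ) ≤ LinearMap.range (Matrix.toLin' σ)

/-- Partial trace over the second tensor factor. -/
def ptraceSnd {α β : Type*} [Fintype β] (M : Matrix (α × β) (α × β) ℂ) : Matrix α α ℂ :=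
  Matrix.of fun i j => ∑ k, M (i, k) (j, k)

/-- Partial trace over the first tensor factor. -/
def ptraceFst {α β : Type*} [Fintype α] (M : Matrix (α × β) (α × β) ℂ) : Matrix β β ℂ :=
  Matrix.of fun i j => ∑ k, M (k, i) (k, j)

variable {dA dB dE : ℕ}

/-- The channel `N_B(ρ) = Tr_E[U ρ U†]`. -/
def chanB (U : Matrix (Fin dB × Fin dE) (Fin dA) ℂ) (ρ : Matrix (Fin dA) (Fin dA) ℂ) :
    Matrix (Fin dB) (Fin dB) ℂ := ptraceSnd (U * ρ * Uᴴ)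

/-- The complementary channel `N_E(ρ) = Tr_B[U ρ U†]`. -/
def chanE (U : Matrix (Fin dB × Fin dE) (Fin dA) ℂ) (ρ : Matrix (Fin dA) (Fin dA) ℂ) :
    Matrix (Fin dE) (Fin dE) ℂ := ptraceFst (U * ρ * Uᴴ)

/-- Coherent information `I_c(ρ) = H(N_B(ρ)) - H(N_E(ρ))`. -/
def cohInfo (U : Matrix (Fin dB × Fin dE) (Fin dA) ℂ) (ρ : Matrix (Fin dA) (Fin dA) ℂ) : ℝ :=
  vnEntropy (chanB U ρ) - vnEntropy (chanE U ρ)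

/-- Holevo quantity of the ensemble `(p, σ)` with respect to the channel `N`. -/
def holevo {ι inn out : Type*} [Fintype ι] [Fintype out] [DecidableEq out]
    [AddCommMonoid (Matrix inn inn ℂ)]
    (N : Matrix inn inn ℂ → Matrix out out ℂ)
    (p : ι → ℝ) (σ : ι → Matrix inn inn ℂ) : ℝ :=
  vnEntropy (N (∑ u, (p u : ℂ) • σ u)) - ∑ u, p u * vnEntropy (N (σ u))

/-- A finite ensemble: a probability distribution together with states. -/
def IsEnsemble {ι inn : Type*} [Fintype ι] [Fintype inn]
    (p : ι → ℝ) (σ : ι → Matrix inn inn ℂ) : Prop :=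
  (∀ u, 0 ≤ p u) ∧ (∑ u, p u = 1) ∧ (∀ u, IsState (σ u))

/-- `Q^{(1)}`: optimized coherent information. -/
def Q1 (U : Matrix (Fin dB × Fin dE) (Fin dA) ℂ) : ℝ :=
  sSup { r | ∃ ρ, IsState ρ ∧ r = cohInfo U ρ }

/-- `C_p^{(1)}`: optimized difference of Holevo quantities. -/
def Cp1 (U : Matrix (Fin dB × Fin dE) (Fin dA) ℂ) : ℝ :=
  sSup { r | ∃ (m : ℕ) (p : Fin m → ℝ) (σ : Fin m → Matrix (Fin dA) (Fin dA) ℂ),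
    IsEnsemble p σ ∧ r = holevo (chanB U) p σ - holevo (chanE U) p σ }


namespace Matrix

section Spectral

variable {n : Type*} [Fintype n] [DecidableEq n] {A : Matrix n n ℂ}

lemma IsHermitian.trace_cfc (hA : A.IsHermitian) (f : ℝ → ℝ) :
    (cfc f A).trace = ∑ i, (f (hA.eigenvalues i) : ℂ) := by
  rw [hA.cfc_eq, IsHermitian.cfc, Unitary.conjStarAlgAut_apply, trace_mul_cycle,
    Unitary.coe_star_mul_self, one_mul, trace_diagonal]
  rfl

open scoped MatrixOrder in
lemma IsHermitian.posSemidef_sub_smul_one_iff (hA : A.IsHermitian) (r : ℝ) :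
    (A - (r : ℂ) • 1).PosSemidef ↔ ∀ i, r ≤ hA.eigenvalues i := by
  rw [← le_iff, Complex.coe_smul, ← Algebra.algebraMap_eq_smul_one,
    algebraMap_le_iff_le_spectrum hA.isSelfAdjoint, hA.spectrum_real_eq_range_eigenvalues,
    Set.forall_mem_range]

open scoped MatrixOrder in
lemma IsHermitian.posSemidef_smul_one_sub_iff (hA : A.IsHermitian) (r : ℝ) :
    ((r : ℂ) • 1 - A).PosSemidef ↔ ∀ i, hA.eigenvalues i ≤ r := by
  rw [← le_iff, Complex.coe_smul, ← Algebra.algebraMap_eq_smul_one,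
    le_algebraMap_iff_spectrum_le hA.isSelfAdjoint, hA.spectrum_real_eq_range_eigenvalues,
    Set.forall_mem_range]

lemma PosDef.exists_pos_le_eigenvalues (hA : A.PosDef) :
    ∃ c : ℝ, 0 < c ∧ ∀ i, c ≤ hA.isHermitian.eigenvalues i := by
  rcases isEmpty_or_nonempty n with hn | hn
  · exact ⟨1, one_pos, isEmptyElim⟩
  · obtain ⟨i₀, hi₀⟩ := Finite.exists_min hA.isHermitian.eigenvalues
    exact ⟨_, hA.eigenvalues_pos i₀, hi₀⟩

lemma IsHermitian.eq_sum_smul_vecMulVec (hA : A.IsHermitian) :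
    A = ∑ i, (hA.eigenvalues i : ℂ) •
      vecMulVec ⇑(hA.eigenvectorBasis i) (star ⇑(hA.eigenvectorBasis i)) := by
  conv_lhs => rw [hA.spectral_theorem]
  ext j k
  simp [Unitary.conjStarAlgAut_apply, mul_apply, Matrix.sum_apply, vecMulVec_apply,
    diagonal_apply, mul_assoc, mul_left_comm]

lemma IsHermitian.trace_vecMulVec_eigenvectorBasis (hA : A.IsHermitian) (i : n) :
    (vecMulVec ⇑(hA.eigenvectorBasis i) (star ⇑(hA.eigenvectorBasis i))).trace = 1 := by
  rw [trace_vecMulVec, ← EuclideanSpace.inner_eq_star_dotProduct, inner_self_eq_norm_sq_to_K,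
    hA.eigenvectorBasis.orthonormal.1 i]
  simp

end Spectral

section PartialTrace

variable {α β : Type*}

lemma ptraceSnd_eq_sum_submatrix [Fintype β] (M : Matrix (α × β) (α × β) ℂ) :
    ptraceSnd M = ∑ k, M.submatrix (·, k) (·, k) := by
  ext i j
  simp [ptraceSnd, Matrix.sum_apply]

lemma ptraceFst_eq_sum_submatrix [Fintype α] (M : Matrix (α × β) (α × β) ℂ) :
    ptraceFst M = ∑ k, M.submatrix (k, ·) (k, ·) := by
  ext i j
  simp [ptraceFst, Matrix.sum_apply]

variable [Fintype α] [Fintype β]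

omit [Fintype α] in
lemma PosSemidef.ptraceSnd {M : Matrix (α × β) (α × β) ℂ} (hM : M.PosSemidef) :
    (ptraceSnd M).PosSemidef := by
  rw [ptraceSnd_eq_sum_submatrix]
  exact posSemidef_sum _ fun k _ => hM.submatrix _

omit [Fintype β] in
lemma PosSemidef.ptraceFst {M : Matrix (α × β) (α × β) ℂ} (hM : M.PosSemidef) :
    (ptraceFst M).PosSemidef := by
  rw [ptraceFst_eq_sum_submatrix]
  exact posSemidef_sum _ fun k _ => hM.submatrix _

lemma trace_ptraceSnd (M : Matrix (α × β) (α × β) ℂ) : (ptraceSnd M).trace = M.trace := by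
  simp [ptraceSnd, trace, Fintype.sum_prod_type]

lemma trace_ptraceFst (M : Matrix (α × β) (α × β) ℂ) : (ptraceFst M).trace = M.trace := by
  simp [ptraceFst, trace, Fintype.sum_prod_type, Finset.sum_comm (γ := α)]

omit [Fintype α] in
lemma ptraceSnd_vecMulVec (φ : α × β → ℂ) :
    ptraceSnd (vecMulVec φ (star φ)) = of (Function.curry φ) * (of (Function.curry φ))ᴴ := by
  ext i j
  simp [ptraceSnd, vecMulVec_apply, mul_apply]

omit [Fintype β] in
lemma ptraceFst_vecMulVec (φ : α × β → ℂ) :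
    ptraceFst (vecMulVec φ (star φ)) = ((of (Function.curry φ))ᴴ * of (Function.curry φ))ᵀ := by
  ext i j
  simp [ptraceFst, vecMulVec_apply, mul_apply, mul_comm]

end PartialTrace

end Matrix

open Polynomial in
lemma Polynomial.sum_map_roots_X_pow_mul {R M : Type*} [CommRing R] [IsDomain R]
    [AddCommMonoid M] {g : R → M} (hg : g 0 = 0) (k : ℕ) {p : R[X]} (hp : p ≠ 0) :
    ((X ^ k * p).roots.map g).sum = (p.roots.map g).sum := by
  rw [roots_mul (mul_ne_zero (pow_ne_zero k X_ne_zero) hp), roots_X_pow]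
  simp [Multiset.map_nsmul, Multiset.sum_nsmul, hg]

section Entropy

variable {n : Type*} [Fintype n] [DecidableEq n]

lemma matLog_eq_cfc {A : Matrix n n ℂ} (hA : A.IsHermitian) : matLog A = cfc Real.log A := by
  rw [matLog, dif_pos hA, hA.cfc_eq, IsHermitian.cfc, Unitary.conjStarAlgAut_apply]
  rfl

lemma vnEntropy_eq_sum_negMulLog {A : Matrix n n ℂ} (hA : A.IsHermitian) :
    vnEntropy A = ∑ i, Real.negMulLog (hA.eigenvalues i) := by
  have hmul : A * matLog A = cfc (fun x => x * Real.log x) A := by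
    rw [matLog_eq_cfc hA, cfc_mul (fun x => x) Real.log A continuousOn_id
      (A.finite_real_spectrum.continuousOn _), cfc_id' ℝ A]
  rw [vnEntropy, hmul, hA.trace_cfc, ← Complex.ofReal_sum, Complex.ofReal_re,
    ← Finset.sum_neg_distrib]
  simp only [Real.negMulLog, neg_mul]

lemma vnEntropy_eq_sum_roots_charpoly {A : Matrix n n ℂ} (hA : A.IsHermitian) :
    vnEntropy A = (A.charpoly.roots.map fun z => Real.negMulLog z.re).sum := by
  rw [vnEntropy_eq_sum_negMulLog hA, hA.roots_charpoly_eq_eigenvalues, Multiset.map_map]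
  rfl

lemma vnEntropy_transpose {A : Matrix n n ℂ} (hA : A.IsHermitian) :
    vnEntropy Aᵀ = vnEntropy A := by
  rw [vnEntropy_eq_sum_roots_charpoly hA.transpose, vnEntropy_eq_sum_roots_charpoly hA,
    charpoly_transpose]

lemma vnEntropy_mul_conjTranspose_self {m : Type*} [Fintype m] [DecidableEq m]
    (M : Matrix m n ℂ) : vnEntropy (M * Mᴴ) = vnEntropy (Mᴴ * M) := by
  have h := congrArg (fun p => (p.roots.map fun z => Real.negMulLog z.re).sum)
    (charpoly_mul_comm' M Mᴴ)
  simp only [Polynomial.sum_map_roots_X_pow_mul (g := fun z : ℂ => Real.negMulLog z.re) (by simp) _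
    (charpoly_monic _).ne_zero] at h
  rwa [vnEntropy_eq_sum_roots_charpoly (isHermitian_mul_conjTranspose_self M),
    vnEntropy_eq_sum_roots_charpoly (isHermitian_conjTranspose_mul_self M)]

lemma Matrix.PosSemidef.vnEntropy_le_card {ρ : Matrix n n ℂ} (hρ : ρ.PosSemidef) :
    vnEntropy ρ ≤ Fintype.card n := by
  rw [vnEntropy_eq_sum_negMulLog hρ.1, ← nsmul_one, ← Finset.card_univ, ← Finset.sum_const]
  refine Finset.sum_le_sum fun i _ => ?_
  linarith [Real.negMulLog_le_one_sub_self (hρ.eigenvalues_nonneg i), hρ.eigenvalues_nonneg i]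

end Entropy

lemma vnEntropy_ptraceSnd_vecMulVec {α β : Type*} [Fintype α] [Fintype β] [DecidableEq α]
    [DecidableEq β] (φ : α × β → ℂ) :
    vnEntropy (ptraceSnd (vecMulVec φ (star φ)))
      = vnEntropy (ptraceFst (vecMulVec φ (star φ))) := by
  rw [ptraceSnd_vecMulVec, ptraceFst_vecMulVec,
    vnEntropy_transpose (isHermitian_conjTranspose_mul_self _), vnEntropy_mul_conjTranspose_self]

section Ensemble

variable {n : Type*} [Fintype n]

lemma IsEnsemble.isState_sum {ι : Type*} [Fintype ι] {p : ι → ℝ} {σ : ι → Matrix n n ℂ}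
    (h : IsEnsemble p σ) : IsState (∑ u, (p u : ℂ) • σ u) := by
  refine ⟨posSemidef_sum _ fun u _ => (h.2.2 u).1.smul (Complex.zero_le_real.2 (h.1 u)), ?_⟩
  simp_rw [trace_sum, trace_smul, (h.2.2 _).2, smul_eq_mul, mul_one]
  exact_mod_cast h.2.1

lemma IsEnsemble.cons {m : ℕ} {p : Fin m → ℝ} {σ : Fin m → Matrix n n ℂ} (h : IsEnsemble p σ)
    {ε : ℝ} (hε0 : 0 ≤ ε) (hε1 : ε ≤ 1) {τ : Matrix n n ℂ} (hτ : IsState τ) :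
    IsEnsemble (Fin.cons ε fun u => (1 - ε) * p u : Fin (m + 1) → ℝ) (Fin.cons τ σ) := by
  refine ⟨Fin.cases hε0 fun u => mul_nonneg (by linarith) (h.1 u), ?_, Fin.cases hτ h.2.2⟩
  rw [Fin.sum_univ_succ]
  simp [← Finset.mul_sum, h.2.1]

omit [Fintype n] in
lemma sum_cons_smul_cons {m : ℕ} (p : Fin m → ℝ) (σ : Fin m → Matrix n n ℂ) (ε : ℝ)
    (τ : Matrix n n ℂ) :
    ∑ u, ((Fin.cons ε fun u => (1 - ε) * p u : Fin (m + 1) → ℝ) u : ℂ) • (Fin.cons τ σ) u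
      = ((1 - ε : ℝ) : ℂ) • ∑ u, (p u : ℂ) • σ u + (ε : ℂ) • τ := by
  rw [Fin.sum_univ_succ, Finset.smul_sum, add_comm]
  simp only [Fin.cons_zero, Fin.cons_succ, Complex.ofReal_mul, mul_smul]

end Ensemble

section State

variable {n : Type*} [Fintype n] [DecidableEq n] {ρ : Matrix n n ℂ}

lemma IsState.conj_isometry {m : Type*} [Fintype m] {V : Matrix m n ℂ} (hV : Vᴴ * V = 1)
    (hρ : IsState ρ) : IsState (V * ρ * Vᴴ) :=
  ⟨hρ.1.mul_mul_conjTranspose_same V, by rw [trace_mul_cycle, hV, one_mul, hρ.2]⟩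

lemma IsState.sum_eigenvalues (hρ : IsState ρ) : ∑ i, hρ.1.1.eigenvalues i = 1 := by
  have h := hρ.2.symm.trans hρ.1.1.trace_eq_sum_eigenvalues
  rw [← RCLike.ofReal_sum] at h
  exact RCLike.ofReal_injective (K := ℂ) (h.symm.trans RCLike.ofReal_one.symm)

lemma IsState.eigenvalues_le_one (hρ : IsState ρ) (i : n) : hρ.1.1.eigenvalues i ≤ 1 :=
  hρ.sum_eigenvalues ▸
    Finset.single_le_sum (fun j _ => hρ.1.eigenvalues_nonneg j) (Finset.mem_univ i)

lemma IsState.vnEntropy_nonneg (hρ : IsState ρ) : 0 ≤ vnEntropy ρ := by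
  rw [vnEntropy_eq_sum_negMulLog hρ.1.1]
  exact Finset.sum_nonneg fun i _ =>
    Real.negMulLog_nonneg (hρ.1.eigenvalues_nonneg i) (hρ.eigenvalues_le_one i)

lemma IsState.isEnsemble_spectral (hρ : IsState ρ) :
    IsEnsemble hρ.1.1.eigenvalues fun i =>
      vecMulVec ⇑(hρ.1.1.eigenvectorBasis i) (star ⇑(hρ.1.1.eigenvectorBasis i)) :=
  ⟨hρ.1.eigenvalues_nonneg, hρ.sum_eigenvalues,
    fun i => ⟨posSemidef_vecMulVec_self_star _, hρ.1.1.trace_vecMulVec_eigenvectorBasis i⟩⟩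

lemma exists_isState_eq_mix_of_posDef {τ : Matrix n n ℂ} (hρ : IsState ρ) (hpd : ρ.PosDef)
    (hτ : IsState τ) :
    ∃ ε : ℝ, 0 < ε ∧ ε < 1 ∧ ∃ σ, IsState σ ∧ ρ = ((1 - ε : ℝ) : ℂ) • σ + (ε : ℂ) • τ := by
  obtain ⟨c, hc0, hc⟩ := hpd.exists_pos_le_eigenvalues
  set ε := min c 2⁻¹
  have hε0 : 0 < ε := lt_min hc0 (by norm_num)
  have hε1 : ε < 1 := (min_le_right _ _).trans_lt (by norm_num)
  have hρε : (ρ - (ε : ℂ) • 1).PosSemidef :=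
    (hpd.isHermitian.posSemidef_sub_smul_one_iff ε).2 fun i => (min_le_left _ _).trans (hc i)
  have hτ1 : (((1 : ℝ) : ℂ) • 1 - τ).PosSemidef :=
    (hτ.1.1.posSemidef_smul_one_sub_iff 1).2 hτ.eigenvalues_le_one
  have hpsd : (ρ - (ε : ℂ) • τ).PosSemidef := by
    have h : ρ - (ε : ℂ) • τ = (ρ - (ε : ℂ) • 1) + (ε : ℂ) • (((1 : ℝ) : ℂ) • 1 - τ) := by
      rw [Complex.ofReal_one, one_smul, smul_sub]
      abel
    rw [h]
    exact hρε.add (hτ1.smul (Complex.zero_le_real.2 hε0.le))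
  have h1ε : (1 - ε : ℝ) ≠ 0 := by linarith
  refine ⟨ε, hε0, hε1, (((1 - ε)⁻¹ : ℝ) : ℂ) • (ρ - (ε : ℂ) • τ), ⟨?_, ?_⟩, ?_⟩
  · exact hpsd.smul (Complex.zero_le_real.2 (inv_nonneg.2 (by linarith)))
  · rw [trace_smul, trace_sub, trace_smul, hρ.2, hτ.2, smul_eq_mul, smul_eq_mul, mul_one,
      ← Complex.ofReal_one, ← Complex.ofReal_sub, ← Complex.ofReal_mul, inv_mul_cancel₀ h1ε]
  · rw [smul_smul, ← Complex.ofReal_mul, mul_inv_cancel₀ h1ε, Complex.ofReal_one, one_smul,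
      sub_add_cancel]

end State

lemma cohInfo_vecMulVec (U : Matrix (Fin dB × Fin dE) (Fin dA) ℂ) (ψ : Fin dA → ℂ) :
    cohInfo U (vecMulVec ψ (star ψ)) = 0 := by
  have h : U * vecMulVec ψ (star ψ) * Uᴴ = vecMulVec (U *ᵥ ψ) (star (U *ᵥ ψ)) := by
    rw [mul_vecMulVec, vecMulVec_mul, star_mulVec]
  rw [cohInfo, chanB, chanE, h, vnEntropy_ptraceSnd_vecMulVec, sub_self]

lemma holevo_chanB_sub_holevo_chanE {ι : Type*} [Fintype ι]
    (U : Matrix (Fin dB × Fin dE) (Fin dA) ℂ) (p : ι → ℝ) (σ : ι → Matrix (Fin dA) (Fin dA) ℂ) :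
    holevo (chanB U) p σ - holevo (chanE U) p σ
      = cohInfo U (∑ u, (p u : ℂ) • σ u) - ∑ u, p u * cohInfo U (σ u) := by
  simp only [holevo, cohInfo, mul_sub, Finset.sum_sub_distrib]
  ring

section Channel

variable {U : Matrix (Fin dB × Fin dE) (Fin dA) ℂ} {ρ : Matrix (Fin dA) (Fin dA) ℂ}

lemma IsState.chanB (hU : Uᴴ * U = 1) (hρ : IsState ρ) : IsState (chanB U ρ) :=
  have h := hρ.conj_isometry hU
  ⟨h.1.ptraceSnd, (trace_ptraceSnd _).trans h.2⟩

lemma IsState.chanE (hU : Uᴴ * U = 1) (hρ : IsState ρ) : IsState (chanE U ρ) :=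
  have h := hρ.conj_isometry hU
  ⟨h.1.ptraceFst, (trace_ptraceFst _).trans h.2⟩

variable {ι : Type*} [Fintype ι] {p : ι → ℝ} {σ : ι → Matrix (Fin dA) (Fin dA) ℂ}

lemma holevo_chanB_sub_holevo_chanE_le (hU : Uᴴ * U = 1) (h : IsEnsemble p σ) :
    holevo (chanB U) p σ - holevo (chanE U) p σ ≤ dB + dE := by
  have havg := h.isState_sum
  have hB : vnEntropy (chanB U (∑ u, (p u : ℂ) • σ u)) ≤ dB := by
    simpa using (havg.chanB hU).1.vnEntropy_le_card
  have hE : ∑ u, p u * vnEntropy (chanE U (σ u)) ≤ dE := by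
    calc ∑ u, p u * vnEntropy (chanE U (σ u)) ≤ ∑ u, p u * dE :=
          Finset.sum_le_sum fun u _ => mul_le_mul_of_nonneg_left
            (by simpa using ((h.2.2 u).chanE hU).1.vnEntropy_le_card) (h.1 u)
      _ = dE := by rw [← Finset.sum_mul, h.2.1, one_mul]
  have hB' : 0 ≤ ∑ u, p u * vnEntropy (chanB U (σ u)) :=
    Finset.sum_nonneg fun u _ => mul_nonneg (h.1 u) ((h.2.2 u).chanB hU).vnEntropy_nonneg
  have hE' := (havg.chanE hU).vnEntropy_nonneg
  unfold holevo
  linarith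

lemma le_Cp1 (hU : Uᴴ * U = 1) {m : ℕ} {p : Fin m → ℝ} {σ : Fin m → Matrix (Fin dA) (Fin dA) ℂ}
    (h : IsEnsemble p σ) : holevo (chanB U) p σ - holevo (chanE U) p σ ≤ Cp1 U := by
  refine le_csSup ⟨dB + dE, ?_⟩ ⟨m, p, σ, h, rfl⟩
  rintro _ ⟨m, p, σ, h, rfl⟩
  exact holevo_chanB_sub_holevo_chanE_le hU h

end Channel

lemma exists_isEnsemble_holevo_sub_holevo_eq (U : Matrix (Fin dB × Fin dE) (Fin dA) ℂ)
    {σ τ : Matrix (Fin dA) (Fin dA) ℂ} (hσ : IsState σ) (hτ : IsState τ) {ε : ℝ} (hε0 : 0 ≤ ε)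
    (hε1 : ε ≤ 1) :
    ∃ (m : ℕ) (p : Fin m → ℝ) (S : Fin m → Matrix (Fin dA) (Fin dA) ℂ), IsEnsemble p S ∧
      holevo (chanB U) p S - holevo (chanE U) p S
        = cohInfo U (((1 - ε : ℝ) : ℂ) • σ + (ε : ℂ) • τ) - ε * cohInfo U τ := by
  refine ⟨_, _, _, hσ.isEnsemble_spectral.cons hε0 hε1 hτ, ?_⟩
  rw [holevo_chanB_sub_holevo_chanE, sum_cons_smul_cons, ← hσ.1.1.eq_sum_smul_vecMulVec,
    Fin.sum_univ_succ]
  simp [cohInfo_vecMulVec]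

theorem full_rank_maximizer_and_negative_cohInfo_implies_Cp1_gt_Q1_general
    {dA dB dE : ℕ}
    (U : Matrix (Fin dB × Fin dE) (Fin dA) ℂ) (hU : Uᴴ * U = 1)
    (hneg : ∃ ρhat : Matrix (Fin dA) (Fin dA) ℂ, IsState ρhat ∧ cohInfo U ρhat < 0)
    (hmax : ∃ ρstar : Matrix (Fin dA) (Fin dA) ℂ,
      IsState ρstar ∧ ρstar.PosDef ∧ cohInfo U ρstar = Q1 U) :
    Q1 U < Cp1 U := by
  obtain ⟨ρhat, hρhat, hneg⟩ := hneg
  obtain ⟨ρstar, hρstar, hpd, hQ⟩ := hmax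
  obtain ⟨ε, hε0, hε1, σ, hσ, hmix⟩ := exists_isState_eq_mix_of_posDef hρstar hpd hρhat
  obtain ⟨m, p, S, hens, hval⟩ :=
    exists_isEnsemble_holevo_sub_holevo_eq U hσ hρhat hε0.le hε1.le
  calc Q1 U = cohInfo U ρstar := hQ.symm
    _ < cohInfo U ρstar - ε * cohInfo U ρhat := by linarith [mul_neg_of_pos_of_neg hε0 hneg]
    _ = holevo (chanB U) p S - holevo (chanE U) p S := by rw [hval, hmix]
    _ ≤ Cp1 U := le_Cp1 hU hens

/-- If some state has strictly negative coherent information and the maximum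
of the coherent information is attained at a full-rank (positive definite) state, then
`C_p^{(1)}(N_B) > Q^{(1)}(N_B)`. -/
theorem full_rank_maximizer_and_negative_cohInfo_implies_Cp1_gt_Q1
    {dA dB dE : ℕ} (hdA : 1 ≤ dA) (hdB : 1 ≤ dB) (hdE : 1 ≤ dE)
    (U : Matrix (Fin dB × Fin dE) (Fin dA) ℂ) (hU : Uᴴ * U = 1)
    (hneg : ∃ ρhat : Matrix (Fin dA) (Fin dA) ℂ, IsState ρhat ∧ cohInfo U ρhat < 0)
    (hmax : ∃ ρstar : Matrix (Fin dA) (Fin dA) ℂ,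
      IsState ρstar ∧ ρstar.PosDef ∧ cohInfo U ρstar = Q1 U) :
    Q1 U < Cp1 U :=
  full_rank_maximizer_and_negative_cohInfo_implies_Cp1_gt_Q1_general U hU hneg hmax

end
end

section
/- The following are equivalent: (i) for every finite ensemble of states on ℂ^{d_A}, the Holevo quantity with respect to N_B is at least the Holevo quantity with respect to N_E; (ii) the coherent information is concave, i.e. for every m ≥ 1, every probability vector (p_1,…,p_m) and all states ρ_1,…,ρ_m on ℂ^{d_A}, I_c(Σ_{i=1}^m p_i ρ_i) ≥ Σ_{i=1}^m p_i I_c(ρ_i). -/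
open Matrix BigOperators
open scoped ComplexOrder

noncomputable section

variable {dA dB dE : ℕ}

/-- The channel is less noisy at `n = 1` (every finite ensemble of states
has Holevo quantity w.r.t. `N_B` at least that w.r.t. `N_E`) if and only if the coherent
information is concave. -/
theorem less_noisy_iff_cohInfo_concave
    {dA dB dE : ℕ} (hdA : 1 ≤ dA) (hdB : 1 ≤ dB) (hdE : 1 ≤ dE)
    (U : Matrix (Fin dB × Fin dE) (Fin dA) ℂ) (hU : Uᴴ * U = 1) :
    (∀ (m : ℕ) (p : Fin m → ℝ) (σ : Fin m → Matrix (Fin dA) (Fin dA) ℂ),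
      IsEnsemble p σ → holevo (chanE U) p σ ≤ holevo (chanB U) p σ)
    ↔ (∀ (m : ℕ), 1 ≤ m → ∀ (p : Fin m → ℝ) (ρs : Fin m → Matrix (Fin dA) (Fin dA) ℂ),
      (∀ i, 0 ≤ p i) → (∑ i, p i = 1) → (∀ i, IsState (ρs i)) →
      ∑ i, p i * cohInfo U (ρs i) ≤ cohInfo U (∑ i, (p i : ℂ) • ρs i)) := by
  have key : ∀ (m : ℕ) (p : Fin m → ℝ) (σ : Fin m → Matrix (Fin dA) (Fin dA) ℂ),
      holevo (chanB U) p σ - holevo (chanE U) p σ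
        = cohInfo U (∑ i, (p i : ℂ) • σ i) - ∑ i, p i * cohInfo U (σ i) := by
    intro m p σ
    simp only [holevo, cohInfo, mul_sub, Finset.sum_sub_distrib]
    ring
  constructor
  · intro h m _ p ρs hp hs hst
    have h1 := h m p ρs ⟨hp, hs, hst⟩
    have h2 := key m p ρs
    linarith
  · intro h m p σ hE
    obtain ⟨hp, hs, hst⟩ := hE
    rcases Nat.eq_zero_or_pos m with hm | hm
    · exfalso
      subst hm
      simp at hs
    · have h1 := h m hm p σ hp hs hst
      have h2 := key m p σ
      linarith

end
end
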